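/- Let g(u) = C₁u² + C₂u + C₃ be a quadratic polynomial with real coefficients and set f(u) = g(u)². Let u(t,x) be any smooth real-valued function of two real variables (not assumed to solve any equation) with u_x(t,x) ≠ 0 for all (t,x). Define T̃₂ᵦ = g(u)/u_x, X̃₂ᵦ = u_xx²·g(u)/u_x³ − 2·u_xx·g'(u)/u_x + u_t·g(u)/u_x² − (2/3)·g(u)³/u_x³ + 2·u_x·g''(u), and Q̃₂ᵦ = −2·u_xx·g(u)/u_x³ + 2·g'(u)/u_x, all evaluated at (t,x). Then the characteristic identity ∂_t T̃₂ᵦ + ∂_x X̃₂ᵦ = Q̃₂ᵦ · (u_t − u_xxx + (3/2)·u_xx²/u_x − g(u)²/u_x) holds at every point (t,x). (Q̃₂ᵦ is the conservation law multiplier admitted by the gKN equation when f is the square of a quadratic polynomial.) -/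

import Mathlib

open Real

/-- Partial derivative with respect to the second (spatial) variable. -/
noncomputable def pdx (u : ℝ → ℝ → ℝ) : ℝ → ℝ → ℝ := fun t x => deriv (fun y => u t y) x

/-- Partial derivative with respect to the first (time) variable. -/
noncomputable def pdt (u : ℝ → ℝ → ℝ) : ℝ → ℝ → ℝ := fun t x => deriv (fun s => u s x) t

/-- `u` solves the generalized Krichever-Novikov equation with nonlinearity `f`:
`u_t = u_xxx - (3/2) u_xx^2/u_x + f(u)/u_x`. -/
def isGKN (f : ℝ → ℝ) (u : ℝ → ℝ → ℝ) : Prop :=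
  ∀ t x, pdt u t x =
    pdx (pdx (pdx u)) t x - (3/2) * (pdx (pdx u) t x)^2 / pdx u t x + f (u t x) / pdx u t x

/-!
For any `C³` nonlinearity `g`, expanding `∂ₜT̃₂ᵦ + ∂ₓX̃₂ᵦ` by the chain and quotient rules and
using `u_xt = u_tx`, everything cancels against `Q̃₂ᵦ` times the gKN residual with `f = g²`,
except the term `2 u_x² g'''(u)` coming from `∂ₓ(2 u_x g''(u))`. It vanishes for quadratic `g`.
-/

open Function

section PartialDerivatives

variable {u : ℝ → ℝ → ℝ} {t x : ℝ}

theorem hasDerivAt_fderiv_apply_right (hu : DifferentiableAt ℝ (uncurry u) (t, x)) :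
    HasDerivAt (u t) (fderiv ℝ (uncurry u) (t, x) (0, 1)) x :=
  hu.hasFDerivAt.comp_hasDerivAt (l := uncurry u) x
    ((hasDerivAt_const x t).prodMk (hasDerivAt_id x))

theorem hasDerivAt_fderiv_apply_left (hu : DifferentiableAt ℝ (uncurry u) (t, x)) :
    HasDerivAt (fun s => u s x) (fderiv ℝ (uncurry u) (t, x) (1, 0)) t :=
  hu.hasFDerivAt.comp_hasDerivAt (l := uncurry u) t
    ((hasDerivAt_id' t).prodMk (hasDerivAt_const t x))

theorem pdx_eq_fderiv (hu : DifferentiableAt ℝ (uncurry u) (t, x)) :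
    pdx u t x = fderiv ℝ (uncurry u) (t, x) (0, 1) :=
  (hasDerivAt_fderiv_apply_right hu).deriv

theorem pdt_eq_fderiv (hu : DifferentiableAt ℝ (uncurry u) (t, x)) :
    pdt u t x = fderiv ℝ (uncurry u) (t, x) (1, 0) :=
  (hasDerivAt_fderiv_apply_left hu).deriv

theorem hasDerivAt_pdx (hu : DifferentiableAt ℝ (uncurry u) (t, x)) :
    HasDerivAt (u t) (pdx u t x) x :=
  pdx_eq_fderiv hu ▸ hasDerivAt_fderiv_apply_right hu

theorem hasDerivAt_pdt (hu : DifferentiableAt ℝ (uncurry u) (t, x)) :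
    HasDerivAt (fun s => u s x) (pdt u t x) t :=
  pdt_eq_fderiv hu ▸ hasDerivAt_fderiv_apply_left hu

theorem uncurry_pdx_eq_fderiv (hu : Differentiable ℝ (uncurry u)) :
    uncurry (pdx u) = fun p => fderiv ℝ (uncurry u) p (0, 1) :=
  funext fun p => pdx_eq_fderiv (hu p)

theorem uncurry_pdt_eq_fderiv (hu : Differentiable ℝ (uncurry u)) :
    uncurry (pdt u) = fun p => fderiv ℝ (uncurry u) p (1, 0) :=
  funext fun p => pdt_eq_fderiv (hu p)

variable {m n : WithTop ℕ∞}

theorem ContDiff.uncurry_pdx (hu : ContDiff ℝ n (uncurry u)) (hmn : m + 1 ≤ n) :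
    ContDiff ℝ m (uncurry (pdx u)) := by
  rw [uncurry_pdx_eq_fderiv (hu.differentiable (by rintro rfl; simp at hmn))]
  exact (hu.fderiv_right hmn).clm_apply contDiff_const

theorem ContDiff.uncurry_pdt (hu : ContDiff ℝ n (uncurry u)) (hmn : m + 1 ≤ n) :
    ContDiff ℝ m (uncurry (pdt u)) := by
  rw [uncurry_pdt_eq_fderiv (hu.differentiable (by rintro rfl; simp at hmn))]
  exact (hu.fderiv_right hmn).clm_apply contDiff_const

theorem pdx_pdt_comm (hu : ContDiff ℝ 2 (uncurry u)) (t x : ℝ) :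
    pdx (pdt u) t x = pdt (pdx u) t x := by
  have hu₁ : Differentiable ℝ (uncurry u) := hu.differentiable two_ne_zero
  have hD : Differentiable ℝ (fderiv ℝ (uncurry u)) :=
    (hu.fderiv_right (m := 1) le_rfl).differentiable one_ne_zero
  have hD_apply : ∀ v w : ℝ × ℝ,
      fderiv ℝ (fun p => fderiv ℝ (uncurry u) p v) (t, x) w
        = fderiv ℝ (fderiv ℝ (uncurry u)) (t, x) w v := fun v w => by
    rw [fderiv_clm_apply (hD _) (differentiableAt_const v)]
    simp
  rw [pdx_eq_fderiv ((hu.uncurry_pdt le_rfl).differentiable one_ne_zero _),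
    pdt_eq_fderiv ((hu.uncurry_pdx le_rfl).differentiable one_ne_zero _),
    uncurry_pdt_eq_fderiv hu₁, uncurry_pdx_eq_fderiv hu₁, hD_apply, hD_apply]
  exact (hu.contDiffAt.isSymmSndFDerivAt
    (by simp [minSmoothness_of_isRCLikeNormedField])).eq _ _

end PartialDerivatives

theorem deriv_quadratic {𝕜 : Type*} [NontriviallyNormedField 𝕜] (a b c : 𝕜) :
    deriv (fun v : 𝕜 => a * v ^ 2 + b * v + c) = fun v => 2 * a * v + b := by
  ext v
  have h := (((hasDerivAt_pow 2 v).const_mul a).add ((hasDerivAt_id v).const_mul b)).add_const c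
  exact h.deriv.trans (by simp; ring)

theorem deriv_affine {𝕜 : Type*} [NontriviallyNormedField 𝕜] (a b : 𝕜) :
    deriv (fun v : 𝕜 => a * v + b) = fun _ => a := by
  ext v
  exact (((hasDerivAt_id v).const_mul a).add_const b).deriv.trans (by simp)

theorem deriv_deriv_deriv_quadratic {𝕜 : Type*} [NontriviallyNormedField 𝕜] (a b c : 𝕜) :
    deriv (deriv (deriv fun v : 𝕜 => a * v ^ 2 + b * v + c)) = 0 := by
  rw [deriv_quadratic, deriv_affine, deriv_const']
  rfl

section Conservation

/-- `gKNDensity`, `gKNFlux` and `gKNMultiplier` are `T̃₂ᵦ`, `X̃₂ᵦ` and `Q̃₂ᵦ`. -/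
noncomputable def gKNDensity (g : ℝ → ℝ) (u : ℝ → ℝ → ℝ) : ℝ → ℝ → ℝ :=
  fun t x => g (u t x) / pdx u t x

noncomputable def gKNFlux (g : ℝ → ℝ) (u : ℝ → ℝ → ℝ) : ℝ → ℝ → ℝ := fun t x =>
  pdx (pdx u) t x ^ 2 * g (u t x) / pdx u t x ^ 3
    - 2 * pdx (pdx u) t x * deriv g (u t x) / pdx u t x
    + pdt u t x * g (u t x) / pdx u t x ^ 2 - 2 / 3 * g (u t x) ^ 3 / pdx u t x ^ 3
    + 2 * pdx u t x * deriv (deriv g) (u t x)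

noncomputable def gKNMultiplier (g : ℝ → ℝ) (u : ℝ → ℝ → ℝ) : ℝ → ℝ → ℝ := fun t x =>
  -(2 * pdx (pdx u) t x * g (u t x) / pdx u t x ^ 3) + 2 * deriv g (u t x) / pdx u t x

noncomputable def gKNResidual (f : ℝ → ℝ) (u : ℝ → ℝ → ℝ) : ℝ → ℝ → ℝ := fun t x =>
  pdt u t x - pdx (pdx (pdx u)) t x + 3 / 2 * pdx (pdx u) t x ^ 2 / pdx u t x
    - f (u t x) / pdx u t x

variable {g : ℝ → ℝ} {u : ℝ → ℝ → ℝ} {t x : ℝ}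

theorem hasDerivAt_gKNDensity (hg : Differentiable ℝ g) (hu : ContDiff ℝ 2 (uncurry u))
    (hux : pdx u t x ≠ 0) :
    HasDerivAt (fun s => gKNDensity g u s x)
      ((deriv g (u t x) * pdt u t x * pdx u t x - g (u t x) * pdt (pdx u) t x) / pdx u t x ^ 2) t :=
  ((hg _).hasDerivAt.comp t (hasDerivAt_pdt (hu.differentiable two_ne_zero _))).div
    (hasDerivAt_pdt ((hu.uncurry_pdx le_rfl).differentiable one_ne_zero _)) hux

theorem gKN_characteristic_defect (hg : ContDiff ℝ 3 g) (hu : ContDiff ℝ 3 (uncurry u))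
    (hux : pdx u t x ≠ 0) :
    pdt (gKNDensity g u) t x + pdx (gKNFlux g u) t x
      = gKNMultiplier g u t x * gKNResidual (fun v => g v ^ 2) u t x
        + 2 * pdx u t x ^ 2 * deriv (deriv (deriv g)) (u t x) := by
  have hg₀ : Differentiable ℝ g := hg.differentiable (by norm_num)
  have hg₁ : Differentiable ℝ (deriv g) := (hg.of_le (by norm_num)).differentiable_deriv_two
  have hg₂ : Differentiable ℝ (deriv (deriv g)) := by fun_prop
  have hux₁ : ContDiff ℝ 2 (uncurry (pdx u)) := hu.uncurry_pdx le_rfl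
  have hu₀ : HasDerivAt (u t) (pdx u t x) x := hasDerivAt_pdx (hu.differentiable (by norm_num) _)
  have hu₁ : HasDerivAt (pdx u t) (pdx (pdx u) t x) x :=
    hasDerivAt_pdx (hux₁.differentiable two_ne_zero _)
  have hu₂ : HasDerivAt (pdx (pdx u) t) (pdx (pdx (pdx u)) t x) x :=
    hasDerivAt_pdx ((hux₁.uncurry_pdx (m := 1) le_rfl).differentiable one_ne_zero _)
  have hut : HasDerivAt (pdt u t) (pdt (pdx u) t x) x :=
    pdx_pdt_comm (hu.of_le (by norm_num)) t x ▸
      hasDerivAt_pdx ((hu.uncurry_pdt (m := 2) le_rfl).differentiable two_ne_zero _)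
  have hG₀ := (hg₀ _).hasDerivAt.comp x hu₀
  have hG₁ := (hg₁ _).hasDerivAt.comp x hu₀
  have hG₂ := (hg₂ _).hasDerivAt.comp x hu₀
  have hX : pdx (gKNFlux g u) t x = _ :=
    (((((((hu₂.fun_pow 2).fun_mul hG₀).fun_div (hu₁.fun_pow 3) (pow_ne_zero 3 hux)).fun_sub
      (((hu₂.const_mul 2).fun_mul hG₁).fun_div hu₁ hux)).fun_add
      ((hut.fun_mul hG₀).fun_div (hu₁.fun_pow 2) (pow_ne_zero 2 hux))).fun_sub
      (((hG₀.fun_pow 3).const_mul (2/3)).fun_div (hu₁.fun_pow 3) (pow_ne_zero 3 hux))).fun_add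
      ((hu₁.const_mul 2).fun_mul hG₂)).deriv
  have hT : pdt (gKNDensity g u) t x = _ :=
    (hasDerivAt_gKNDensity hg₀ (hu.of_le (by norm_num)) hux).deriv
  rw [hT, hX]
  simp only [gKNMultiplier, gKNResidual, comp_apply]
  field_simp
  ring

end Conservation

/-- The characteristic identity for the multiplier `Q̃₂ᵦ = -2 u_xx g(u)/u_x³ + 2 g'(u)/u_x`
of the gKN equation with `f = g²`, holding for arbitrary smooth `u`. -/
theorem gKN_multiplier_Q2b (C₁ C₂ C₃ : ℝ)
    (g : ℝ → ℝ) (hg : ∀ v, g v = C₁ * v^2 + C₂ * v + C₃)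
    (u : ℝ → ℝ → ℝ) (hu : ContDiff ℝ (⊤ : ℕ∞) (Function.uncurry u))
    (hux : ∀ t x, pdx u t x ≠ 0) :
    ∀ t x,
      pdt (fun t x => (g (u t x)) / (pdx u t x)) t x
        + pdx (fun t x =>
            (pdx (pdx u) t x)^2 * (g (u t x)) / (pdx u t x)^3 - 2 * (pdx (pdx u) t x) * (deriv g (u t x)) / (pdx u t x)
              + (pdt u t x) * (g (u t x)) / (pdx u t x)^2 - (2/3) * (g (u t x))^3 / (pdx u t x)^3
              + 2 * (pdx u t x) * (deriv (deriv g) (u t x))) t x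
      = (-(2 * (pdx (pdx u) t x) * (g (u t x)) / (pdx u t x)^3) + 2 * (deriv g (u t x)) / (pdx u t x))
          * ((pdt u t x) - (pdx (pdx (pdx u)) t x) + (3/2) * (pdx (pdx u) t x)^2 / (pdx u t x) - (g (u t x))^2 / (pdx u t x)) := by
  intro t x
  obtain rfl : g = fun v => C₁ * v ^ 2 + C₂ * v + C₃ := funext hg
  have hg₃ : ContDiff ℝ 3 fun v => C₁ * v ^ 2 + C₂ * v + C₃ := by fun_prop
  have h := gKN_characteristic_defect hg₃ (hu.of_le (WithTop.coe_le_coe.mpr le_top)) (hux t x)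
  rwa [deriv_deriv_deriv_quadratic, Pi.zero_apply, mul_zero, add_zero] at h
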